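/- Functoriality of the bicategorical trace: Let B and C be bicategories equipped with shadows ⟦−⟧_B and ⟦−⟧_C valued in categories T and Z respectively, and let (F, F_tr, φ) be a lax shadow functor from B to C. Let (M, M∨, η, ε) be a dual pair in B with M : R → S such that i_R, i_S, and c_{M,M∨} are invertible, and let f : Q ⊙ M → M ⊙ P be a 2-cell (Q : R → R, P : S → S) such that c_{M,P} is invertible. Then F_tr(tr(f)) ∘ φ_Q = φ_P ∘ tr(c_{M,P}⁻¹ ∘ F(f) ∘ c_{Q,M}) as morphisms ⟦F(Q)⟧_C → F_tr(⟦P⟧_B), where the trace on the right is taken in C with respect to the dual pair (F(M), F(M∨)) with coevaluation c_{M,M∨}⁻¹ ∘ F(η) ∘ i_R and evaluation i_S⁻¹ ∘ F(ε) ∘ c_{M∨,M}. -/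

import Mathlib

open CategoryTheory Category Bicategory

universe w v u w' v' u' v₁ u₁ v₂ u₂

/-- The data of a candidate dual pair in a bicategory (horizontal composition written in
diagrammatic order): 1-cells `M : R ⟶ S` and `Mv : S ⟶ R` together with a coevaluation
`η : 𝟙 R ⟶ M ≫ Mv` and an evaluation `ε : Mv ≫ M ⟶ 𝟙 S`. -/
structure BicatDualData {B : Type u} [Bicategory.{w, v} B] (R S : B) where
  M : R ⟶ S
  Mv : S ⟶ R
  η : 𝟙 R ⟶ M ≫ Mv
  eps : Mv ≫ M ⟶ 𝟙 S

/-- The two triangle identities, saying that `(M, Mv, η, ε)` is a dual pair, i.e. that `M`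
is right dualizable with right dual `Mv`. -/
def BicatDualData.IsDualPair {B : Type u} [Bicategory.{w, v} B] {R S : B}
    (D : BicatDualData R S) : Prop :=
  ((λ_ D.M).inv ≫ (D.η ▷ D.M) ≫ (α_ D.M D.Mv D.M).hom ≫ (D.M ◁ D.eps) ≫ (ρ_ D.M).hom
      = 𝟙 D.M) ∧
  ((ρ_ D.Mv).inv ≫ (D.Mv ◁ D.η) ≫ (α_ D.Mv D.M D.Mv).inv ≫ (D.eps ▷ D.Mv) ≫ (λ_ D.Mv).hom
      = 𝟙 D.Mv)

/-- A shadow on a bicategory `B` with values in a category `V`: functors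
`⟦-⟧ : B(R,R) ⥤ V` for every 0-cell `R`, together with natural isomorphisms
`θ_{M,N} : ⟦M ≫ N⟧ ≅ ⟦N ≫ M⟧` satisfying the hexagon and unit axioms. -/
structure Shadow (B : Type u) [Bicategory.{w, v} B] (V : Type u₁) [Category.{v₁} V] where
  sh : ∀ R : B, (R ⟶ R) ⥤ V
  θ : ∀ {R S : B} (M : R ⟶ S) (N : S ⟶ R), (sh R).obj (M ≫ N) ≅ (sh S).obj (N ≫ M)
  θ_natural : ∀ {R S : B} {M M' : R ⟶ S} {N N' : S ⟶ R} (f : M ⟶ M') (g : N ⟶ N'),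
    (sh R).map (f ▷ N ≫ M' ◁ g) ≫ (θ M' N').hom
      = (θ M N).hom ≫ (sh S).map (g ▷ M ≫ N' ◁ f)
  hexagon : ∀ {R S T : B} (M : R ⟶ S) (N : S ⟶ T) (P : T ⟶ R),
    (θ (M ≫ N) P).hom ≫ (sh T).map (α_ P M N).inv
      = (sh R).map (α_ M N P).hom ≫ (θ M (N ≫ P)).hom ≫ (sh S).map (α_ N P M).hom ≫
          (θ N (P ≫ M)).hom
  unit_right : ∀ {R : B} (M : R ⟶ R),
    (θ M (𝟙 R)).hom ≫ (sh R).map (λ_ M).hom = (sh R).map (ρ_ M).hom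
  unit_left : ∀ {R : B} (M : R ⟶ R),
    (θ (𝟙 R) M).hom ≫ (sh R).map (ρ_ M).hom = (sh R).map (λ_ M).hom

/-- The bicategorical trace of a 2-cell `f : Q ≫ M ⟶ M ≫ P` (`Q : R ⟶ R`, `P : S ⟶ S`)
with respect to a (candidate) dual pair `(M, Mv, η, ε)`, relative to a shadow: the composite
`⟦Q⟧ ≅ ⟦Q ⊙ U_R⟧ → ⟦Q ⊙ (M ⊙ M∨)⟧ ≅ ⟦(Q ⊙ M) ⊙ M∨⟧ → ⟦(M ⊙ P) ⊙ M∨⟧ ≅θ ⟦M∨ ⊙ (M ⊙ P)⟧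
≅ ⟦(M∨ ⊙ M) ⊙ P⟧ → ⟦U_S ⊙ P⟧ ≅ ⟦P⟧`. -/
def btrace {B : Type u} [Bicategory.{w, v} B] {V : Type u₁} [Category.{v₁} V]
    (sh : Shadow B V) {R S : B} (D : BicatDualData R S) {Q : R ⟶ R} {P : S ⟶ S}
    (f : Q ≫ D.M ⟶ D.M ≫ P) : (sh.sh R).obj Q ⟶ (sh.sh S).obj P :=
  (sh.sh R).map ((ρ_ Q).inv ≫ (Q ◁ D.η) ≫ (α_ Q D.M D.Mv).inv ≫ (f ▷ D.Mv)) ≫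
    (sh.θ (D.M ≫ P) D.Mv).hom ≫
    (sh.sh S).map ((α_ D.Mv D.M P).inv ≫ (D.eps ▷ P) ≫ (λ_ P).hom)

/-- The image duality data of `(M, M∨, η, ε)` under a lax functor `F` whose relevant
structural 2-cells are invertible: the coevaluation is `c_{M,M∨}⁻¹ ∘ F(η) ∘ i_R` and the
evaluation is `i_S⁻¹ ∘ F(ε) ∘ c_{M∨,M}`. -/
noncomputable abbrev laxImage {B : Type u} {C : Type u'} [Bicategory.{w, v} B]
    [Bicategory.{w', v'} C] (F : LaxFunctor B C) {R S : B} (D : BicatDualData R S)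
    [IsIso (F.mapId R)] [IsIso (F.mapId S)] [IsIso (F.mapComp D.M D.Mv)] :
    BicatDualData (F.obj R) (F.obj S) where
  M := F.map D.M
  Mv := F.map D.Mv
  η := F.mapId R ≫ F.map₂ D.η ≫ inv (F.mapComp D.M D.Mv)
  eps := F.mapComp D.Mv D.M ≫ F.map₂ D.eps ≫ inv (F.mapId S)

/-- A lax shadow functor between bicategories with shadows: a lax functor `F : B ⟶ C`
together with a functor `Ftr : T ⥤ Z` between the value categories of the shadows and a
natural transformation `φ` with components `φ_M : ⟦F M⟧_C ⟶ Ftr ⟦M⟧_B` for `M : R ⟶ R`,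
compatible with the shadow isomorphisms `θ`. -/
structure LaxShadowFunctor {B : Type u} {C : Type u'} [Bicategory.{w, v} B]
    [Bicategory.{w', v'} C] {T : Type u₁} [Category.{v₁} T] {Z : Type u₂} [Category.{v₂} Z]
    (shB : Shadow B T) (shC : Shadow C Z) where
  F : LaxFunctor B C
  Ftr : T ⥤ Z
  φ : ∀ {R : B} (M : R ⟶ R), (shC.sh (F.obj R)).obj (F.map M) ⟶ Ftr.obj ((shB.sh R).obj M)
  φ_natural : ∀ {R : B} {M N : R ⟶ R} (f : M ⟶ N),
    (shC.sh (F.obj R)).map (F.map₂ f) ≫ φ N = φ M ≫ Ftr.map ((shB.sh R).map f)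
  φ_comp : ∀ {R S : B} (M : R ⟶ S) (N : S ⟶ R),
    (shC.sh (F.obj R)).map (F.mapComp M N) ≫ φ (M ≫ N) ≫ Ftr.map (shB.θ M N).hom
      = (shC.θ (F.map M) (F.map N)).hom ≫ (shC.sh (F.obj S)).map (F.mapComp N M) ≫
          φ (N ≫ M)

/-! The trace is a twisted composite `⟦a⟧ ≫ θ ≫ ⟦b⟧` of a 2-cell `a : Q ⟶ (M ≫ P) ≫ M∨` built
from `η` and `f` and a 2-cell `b : M∨ ≫ (M ≫ P) ⟶ P` built from `ε`. Naturality of `φ` and its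
compatibility with `θ` show that a lax shadow functor carries twisted composites to twisted
composites, once `F a` and `F b` are factored through the structure cells `c`. The lax functor
axioms provide these factorizations, except that `F a` lands in `F(M ≫ P)` rather than
`F M ≫ F P`; the invertible cell `c_{M,P}` is moved across `θ` by naturality. -/

namespace Shadow

variable {B : Type u} [Bicategory.{w, v} B] {V : Type u₁} [Category.{v₁} V] (sh : Shadow B V)

def twistedComp {R S : B} {Q : R ⟶ R} {P : S ⟶ S} {X : R ⟶ S} {Y : S ⟶ R} (a : Q ⟶ X ≫ Y)
    (b : Y ≫ X ⟶ P) : (sh.sh R).obj Q ⟶ (sh.sh S).obj P :=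
  (sh.sh R).map a ≫ (sh.θ X Y).hom ≫ (sh.sh S).map b

theorem map_whiskerRight_comp_θ_hom {R S : B} {X X' : R ⟶ S} (g : X ⟶ X') (Y : S ⟶ R) :
    (sh.sh R).map (g ▷ Y) ≫ (sh.θ X' Y).hom = (sh.θ X Y).hom ≫ (sh.sh S).map (Y ◁ g) := by
  simpa using sh.θ_natural g (𝟙 Y)

theorem twistedComp_comp_whiskerRight {R S : B} {Q : R ⟶ R} {P : S ⟶ S} {X X' : R ⟶ S}
    {Y : S ⟶ R} (a : Q ⟶ X ≫ Y) (g : X ⟶ X') (b : Y ≫ X' ⟶ P) :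
    sh.twistedComp (a ≫ g ▷ Y) b = sh.twistedComp a (Y ◁ g ≫ b) := by
  simp only [twistedComp, Functor.map_comp, assoc,
    reassoc_of% sh.map_whiskerRight_comp_θ_hom g Y]

end Shadow

section Trace

variable {B : Type u} [Bicategory.{w, v} B]

def traceCoevStep {R S : B} {M : R ⟶ S} {Mv : S ⟶ R} (η : 𝟙 R ⟶ M ≫ Mv) {Q : R ⟶ R}
    {P : S ⟶ S} (f : Q ≫ M ⟶ M ≫ P) : Q ⟶ (M ≫ P) ≫ Mv :=
  (ρ_ Q).inv ≫ Q ◁ η ≫ (α_ Q M Mv).inv ≫ f ▷ Mv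

def traceEvalStep {R S : B} {M : R ⟶ S} {Mv : S ⟶ R} (eps : Mv ≫ M ⟶ 𝟙 S) (P : S ⟶ S) :
    Mv ≫ M ≫ P ⟶ P :=
  (α_ Mv M P).inv ≫ eps ▷ P ≫ (λ_ P).hom

theorem btrace_eq_twistedComp {V : Type u₁} [Category.{v₁} V] (sh : Shadow B V) {R S : B}
    (D : BicatDualData R S) {Q : R ⟶ R} {P : S ⟶ S} (f : Q ≫ D.M ⟶ D.M ≫ P) :
    btrace sh D f = sh.twistedComp (traceCoevStep D.η f) (traceEvalStep D.eps P) :=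
  rfl

end Trace

namespace CategoryTheory.LaxFunctor

variable {B : Type u} {C : Type u'} [Bicategory.{w, v} B] [Bicategory.{w', v'} C]
  (F : LaxFunctor B C)

theorem mapComp_comp_map₂_associator_inv {a b c d : B} (f : a ⟶ b) (g : b ⟶ c) (h : c ⟶ d)
    [IsIso (F.mapComp g h)] :
    F.mapComp f (g ≫ h) ≫ F.map₂ (α_ f g h).inv
      = F.map f ◁ inv (F.mapComp g h) ≫ (α_ (F.map f) (F.map g) (F.map h)).inv ≫
          F.mapComp f g ▷ F.map h ≫ F.mapComp (f ≫ g) h := by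
  rw [F.mapComp_assoc_left]
  simp [← Bicategory.inv_whiskerLeft]

theorem map₂_traceCoevStep {R S : B} {M : R ⟶ S} {Mv : S ⟶ R} (η : 𝟙 R ⟶ M ≫ Mv)
    {Q : R ⟶ R} {P : S ⟶ S} (f : Q ≫ M ⟶ M ≫ P) [IsIso (F.mapComp M Mv)]
    [IsIso (F.mapComp M P)] :
    F.map₂ (traceCoevStep η f)
      = (traceCoevStep (F.mapId R ≫ F.map₂ η ≫ inv (F.mapComp M Mv))
          (F.mapComp Q M ≫ F.map₂ f ≫ inv (F.mapComp M P)) ≫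
        F.mapComp M P ▷ F.map Mv) ≫ F.mapComp (M ≫ P) Mv := by
  simp only [traceCoevStep, PrelaxFunctor.map₂_comp, assoc, comp_whiskerRight,
    Bicategory.whiskerLeft_comp, IsIso.inv_hom_id_assoc, F.map₂_rightUnitor,
    F.mapComp_naturality_right_assoc, F.mapComp_naturality_left,
    reassoc_of% F.mapComp_comp_map₂_associator_inv Q M Mv, ← Bicategory.inv_whiskerRight]

theorem mapComp_comp_map₂_traceEvalStep {R S : B} {M : R ⟶ S} {Mv : S ⟶ R}
    (eps : Mv ≫ M ⟶ 𝟙 S) (P : S ⟶ S) [IsIso (F.mapId S)] :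
    F.map Mv ◁ F.mapComp M P ≫ F.mapComp Mv (M ≫ P) ≫ F.map₂ (traceEvalStep eps P)
      = traceEvalStep (F.mapComp Mv M ≫ F.map₂ eps ≫ inv (F.mapId S)) (F.map P) := by
  rw [traceEvalStep, traceEvalStep, F.map₂_leftUnitor_hom]
  simp only [PrelaxFunctor.map₂_comp, assoc, F.mapComp_assoc_right_assoc,
    PrelaxFunctor.map₂_hom_inv_assoc, F.mapComp_naturality_left_assoc, comp_whiskerRight,
    ← Bicategory.inv_whiskerRight, IsIso.inv_hom_id_assoc]

end CategoryTheory.LaxFunctor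

namespace LaxShadowFunctor

variable {B : Type u} {C : Type u'} [Bicategory.{w, v} B] [Bicategory.{w', v'} C]
  {T : Type u₁} [Category.{v₁} T] {Z : Type u₂} [Category.{v₂} Z]
  {shB : Shadow B T} {shC : Shadow C Z} (E : LaxShadowFunctor shB shC)

theorem φ_comp_map_twistedComp {R S : B} {Q : R ⟶ R} {P : S ⟶ S} {X : R ⟶ S} {Y : S ⟶ R}
    {a : Q ⟶ X ≫ Y} {b : Y ≫ X ⟶ P} {a' : E.F.map Q ⟶ E.F.map X ≫ E.F.map Y}
    {b' : E.F.map Y ≫ E.F.map X ⟶ E.F.map P} (ha : E.F.map₂ a = a' ≫ E.F.mapComp X Y)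
    (hb : E.F.mapComp Y X ≫ E.F.map₂ b = b') :
    E.φ Q ≫ E.Ftr.map (shB.twistedComp a b) = shC.twistedComp a' b' ≫ E.φ P := by
  rw [Shadow.twistedComp, Shadow.twistedComp, Functor.map_comp, Functor.map_comp,
    ← reassoc_of% E.φ_natural a, ha, Functor.map_comp, assoc, reassoc_of% E.φ_comp X Y,
    ← E.φ_natural b, ← hb, Functor.map_comp, assoc, assoc, assoc]

end LaxShadowFunctor

theorem laxShadowFunctor_preserves_trace_general {B : Type u} {C : Type u'} [Bicategory.{w, v} B]
    [Bicategory.{w', v'} C] {T : Type u₁} [Category.{v₁} T] {Z : Type u₂} [Category.{v₂} Z]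
    (shB : Shadow B T) (shC : Shadow C Z) (E : LaxShadowFunctor shB shC)
    {R S : B} (D : BicatDualData R S)
    [IsIso (E.F.mapId R)] [IsIso (E.F.mapId S)] [IsIso (E.F.mapComp D.M D.Mv)]
    {Q : R ⟶ R} {P : S ⟶ S} (f : Q ≫ D.M ⟶ D.M ≫ P) [IsIso (E.F.mapComp D.M P)] :
    E.φ Q ≫ E.Ftr.map (btrace shB D f)
      = btrace shC (laxImage E.F D)
          (E.F.mapComp Q D.M ≫ E.F.map₂ f ≫ inv (E.F.mapComp D.M P)) ≫ E.φ P := by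
  rw [btrace_eq_twistedComp, btrace_eq_twistedComp,
    E.φ_comp_map_twistedComp (E.F.map₂_traceCoevStep D.η f) rfl,
    shC.twistedComp_comp_whiskerRight, E.F.mapComp_comp_map₂_traceEvalStep]

/-- Functoriality of the bicategorical trace: for a lax shadow functor `(F, Ftr, φ)`, a
dual pair `(M, M∨, η, ε)` with `i_R`, `i_S`, `c_{M,M∨}` invertible, and a 2-cell
`f : Q ⊙ M ⟶ M ⊙ P` with `c_{M,P}` invertible,
`Ftr(tr f) ∘ φ_Q = φ_P ∘ tr(c_{M,P}⁻¹ ∘ F(f) ∘ c_{Q,M})`, the right-hand trace being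
taken with respect to the induced dual pair `(F M, F M∨)`. -/
theorem laxShadowFunctor_preserves_trace {B : Type u} {C : Type u'} [Bicategory.{w, v} B]
    [Bicategory.{w', v'} C] {T : Type u₁} [Category.{v₁} T] {Z : Type u₂} [Category.{v₂} Z]
    (shB : Shadow B T) (shC : Shadow C Z) (E : LaxShadowFunctor shB shC)
    {R S : B} (D : BicatDualData R S) (hD : D.IsDualPair)
    [IsIso (E.F.mapId R)] [IsIso (E.F.mapId S)] [IsIso (E.F.mapComp D.M D.Mv)]
    {Q : R ⟶ R} {P : S ⟶ S} (f : Q ≫ D.M ⟶ D.M ≫ P) [IsIso (E.F.mapComp D.M P)] :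
    E.φ Q ≫ E.Ftr.map (btrace shB D f)
      = btrace shC (laxImage E.F D)
          (E.F.mapComp Q D.M ≫ E.F.map₂ f ≫ inv (E.F.mapComp D.M P)) ≫ E.φ P :=
  laxShadowFunctor_preserves_trace_general shB shC E D f
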